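/- arXiv:2509.01101 — 4 statements merged into one kernel-verified Lean document; each statement's English description precedes it below -/
import Mathlib

section
/- Let A be a finite-dimensional commutative unital algebra over the complex numbers, graded by an abelian group M, i.e. A = ⊕_{χ ∈ M} A^χ with A^χ · A^ψ ⊆ A^{χ+ψ}. Suppose there exist d ∈ ℤ_{>0} and χ ∈ M such that dim A^χ > dim A^{dχ}. Then there exists a nonzero element ε ∈ A with ε^d = 0. -/
/-!
If no nonzero element has vanishing `d`-th power, then `d ≥ 2` (for `d = 1` the two graded
pieces coincide) and `A` is reduced. In an Artinian ring the Jacobson radical is the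
nilradical, so an element of the reduced ring `A` vanishes once it lies in every maximal
ideal. Since `ℂ` is infinite, `𝒜 χ` is not covered by the finitely many maximal ideals not
containing it, so some `v ∈ 𝒜 χ` avoids all of them; then `v * u = 0` forces `u = 0` for
`u ∈ 𝒜 χ`, and in a reduced ring the same holds for `v ^ (d - 1) * u`. Multiplication by
`v ^ (d - 1)` thus embeds `𝒜 χ` into `𝒜 (d • χ)`, contradicting the dimension hypothesis.
-/

theorem Submodule.exists_mem_forall_notMem_of_not_le {k E ι : Type*} [DivisionRing k]
    [Infinite k] [AddCommGroup E] [Module k E] [Finite ι] {V : Submodule k E}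
    {p : ι → Submodule k E} (h : ∀ i, ¬V ≤ p i) : ∃ v ∈ V, ∀ i, v ∉ p i := by
  by_contra! hcover
  obtain ⟨i, hi⟩ := Subspace.exists_eq_top_of_iUnion_eq_univ
    (p := fun i => (p i).comap V.subtype) <| Set.eq_univ_of_forall fun v => by
      simpa using hcover v v.2
  exact h i (Submodule.comap_subtype_eq_top.mp hi)

theorem IsReduced.mul_eq_zero_of_pow_mul_eq_zero {R : Type*} [CommMonoidWithZero R]
    [IsReduced R] {a b : R} (k : ℕ) (h : a ^ k * b = 0) : a * b = 0 :=
  IsNilpotent.eq_zero ⟨k + 1, by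
    rw [mul_pow, pow_succ, pow_succ', mul_mul_mul_comm, h, zero_mul]⟩

theorem IsArtinianRing.exists_mem_forall_mul_eq_zero_imp {K A : Type*} [Field K] [Infinite K]
    [CommRing A] [Algebra K A] [IsArtinianRing A] [IsReduced A] (V : Submodule K A) :
    ∃ v ∈ V, ∀ u ∈ V, v * u = 0 → u = 0 := by
  let ι := {m : Ideal A // m.IsMaximal ∧ ¬V ≤ m.restrictScalars K}
  have : Finite ι := ((IsArtinianRing.setOfPred_isMaximal_finite A).subset
    fun m hm => hm.1).to_subtype
  obtain ⟨v, hvV, hv⟩ := Submodule.exists_mem_forall_notMem_of_not_le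
    (p := fun m : ι => m.1.restrictScalars K) fun m => m.2.2
  refine ⟨v, hvV, fun u huV hvu => ?_⟩
  have hu : u ∈ (⊥ : Ideal A).jacobson := Ideal.mem_sInf.mpr fun {m} ⟨_, hm⟩ => by
    by_cases hVm : V ≤ m.restrictScalars K
    · exact hVm huV
    · exact (hm.isPrime.mem_or_mem (hvu ▸ m.zero_mem)).resolve_left (hv ⟨m, hm, hVm⟩)
  rw [IsArtinianRing.jacobson_eq_radical] at hu
  obtain ⟨n, hn⟩ := hu
  exact IsNilpotent.eq_zero ⟨n, Ideal.mem_bot.mp hn⟩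

theorem pow_succ_mem_of_mem {A M σ : Type*} [Monoid A] [AddMonoid M] [SetLike σ A]
    (𝒜 : M → σ)
    (hmul : ∀ (χ ψ : M) (a b : A), a ∈ 𝒜 χ → b ∈ 𝒜 ψ → a * b ∈ 𝒜 (χ + ψ))
    {a : A} {χ : M} (ha : a ∈ 𝒜 χ) (n : ℕ) : a ^ (n + 1) ∈ 𝒜 ((n + 1) • χ) := by
  induction n with
  | zero => simpa using ha
  | succ n ih => simpa only [pow_succ, succ_nsmul] using hmul _ _ _ _ ih ha

theorem stmt0_general (A : Type*) [CommRing A] [Algebra ℂ A] [FiniteDimensional ℂ A]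
    (M : Type*) [AddCommGroup M]
    (𝒜 : M → Submodule ℂ A)
    (hmul : ∀ (χ ψ : M) (a b : A), a ∈ 𝒜 χ → b ∈ 𝒜 ψ → a * b ∈ 𝒜 (χ + ψ))
    (d : ℕ) (hd : 0 < d) (χ : M)
    (hdim : Module.finrank ℂ (𝒜 (d • χ)) < Module.finrank ℂ (𝒜 χ)) :
    ∃ ε : A, ε ≠ 0 ∧ ε ^ d = 0 := by
  by_contra! hpow
  rcases Nat.lt_or_ge d 2 with hd1 | hd2
  · obtain rfl : d = 1 := by omega
    rw [one_nsmul] at hdim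
    exact hdim.false
  obtain ⟨n, rfl⟩ := Nat.exists_eq_add_of_le' hd2
  have : IsReduced A := (isReduced_iff_pow_one_lt (n + 2) (by omega)).mpr fun x hx =>
    not_imp_not.mp (hpow x) hx
  have : IsArtinianRing A := IsArtinianRing.of_finite ℂ A
  obtain ⟨v, hvχ, hv⟩ := IsArtinianRing.exists_mem_forall_mul_eq_zero_imp (𝒜 χ)
  have hvpow : v ^ (n + 1) ∈ 𝒜 ((n + 1) • χ) := pow_succ_mem_of_mem 𝒜 hmul hvχ n
  let f : 𝒜 χ →ₗ[ℂ] 𝒜 ((n + 2) • χ) := (LinearMap.mulLeft ℂ (v ^ (n + 1))).restrict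
    fun u hu => by simpa only [LinearMap.mulLeft_apply, succ_nsmul] using hmul _ _ _ _ hvpow hu
  have hf : Function.Injective f := by
    refine (injective_iff_map_eq_zero f).mpr fun ⟨u, hu⟩ hfu => Subtype.ext (hv u hu ?_)
    exact IsReduced.mul_eq_zero_of_pow_mul_eq_zero (n + 1) (congrArg Subtype.val hfu)
  exact hdim.not_ge (LinearMap.finrank_le_finrank_of_injective hf)

/-- A finite-dimensional commutative unital ℂ-algebra graded by an abelian group `M`;
if some graded piece `𝒜 χ` has larger dimension than `𝒜 (d • χ)` for some `d > 0`,
then there is a nonzero element `ε` with `ε ^ d = 0`. -/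
theorem stmt0 (A : Type*) [CommRing A] [Algebra ℂ A] [FiniteDimensional ℂ A]
    (M : Type*) [AddCommGroup M] [DecidableEq M]
    (𝒜 : M → Submodule ℂ A)
    (hdecomp : DirectSum.IsInternal 𝒜)
    (hone : (1 : A) ∈ 𝒜 0)
    (hmul : ∀ (χ ψ : M) (a b : A), a ∈ 𝒜 χ → b ∈ 𝒜 ψ → a * b ∈ 𝒜 (χ + ψ))
    (d : ℕ) (hd : 0 < d) (χ : M)
    (hdim : Module.finrank ℂ (𝒜 (d • χ)) < Module.finrank ℂ (𝒜 χ)) :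
    ∃ ε : A, ε ≠ 0 ∧ ε ^ d = 0 :=
  stmt0_general A M 𝒜 hmul d hd χ hdim
end

section
/- Let A be a finite-dimensional commutative unital ℂ-algebra, m a positive integer, and α ∈ A an element such that multiplication by α is an invertible linear operator on A. Then A is semisimple (i.e. has no nonzero nilpotent elements) if and only if A[y]/(y^m − α) is semisimple. -/
/-!
Since `α` and `m` are units of `A`, `g = X ^ m - C α` is monic and separable, and it stays
separable modulo every prime `p` of `A`. Over the residue field of `p` a separable polynomial is
squarefree, so if `g` divides a power of a remainder `r = f %ₘ g` it divides `r`, which forces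
`r ≡ 0 mod p` by degree. Hence a nilpotent class in `A[X]/(g)` has a representative whose
coefficients lie in every prime, i.e. are nilpotent, and they vanish when `A` is reduced.
Conversely, `A` embeds in `A[X]/(g)` because `g` is monic of positive degree.
-/

open Polynomial

theorem AdjoinRoot.of_injective_of_monic {R : Type*} [CommRing R] {g : R[X]} (hg : g.Monic)
    (hdeg : 0 < g.degree) : Function.Injective (of g) := by
  nontriviality R
  have hC : ∀ c : R, modByMonicHom hg (of g c) = C c := fun c =>
    (modByMonicHom_mk hg (C c)).trans <|
      (modByMonic_eq_self_iff hg).mpr (degree_C_le.trans_lt hdeg)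
  intro a b hab
  simpa [hC] using congrArg (modByMonicHom hg) hab

namespace Polynomial.Separable

theorem modByMonic_eq_zero_of_dvd_pow {K : Type*} [Field K] {g f : K[X]} (hg : g.Separable)
    (hmonic : g.Monic) {k : ℕ} (hdvd : g ∣ (f %ₘ g) ^ k) : f %ₘ g = 0 :=
  eq_zero_of_dvd_of_degree_lt (hg.squarefree.isRadical k _ hdvd) (degree_modByMonic_lt f hmonic)

variable {R : Type*} [CommRing R] {g : R[X]}

theorem isNilpotent_coeff_modByMonic_of_dvd_pow (hg : g.Separable) (hmonic : g.Monic)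
    {f : R[X]} {k : ℕ} (hdvd : g ∣ (f %ₘ g) ^ k) (n : ℕ) :
    IsNilpotent ((f %ₘ g).coeff n) := by
  refine nilpotent_iff_mem_prime.mpr fun p _ => ?_
  let φ := algebraMap R p.ResidueField
  have hφ : (f %ₘ g).map φ = 0 := by
    have hdvd' := Polynomial.map_dvd φ hdvd
    rw [Polynomial.map_pow, map_modByMonic φ hmonic] at hdvd'
    rw [map_modByMonic φ hmonic]
    exact hg.map.modByMonic_eq_zero_of_dvd_pow (hmonic.map φ) hdvd'
  simpa [φ] using congrArg (coeff · n) hφ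

theorem isReduced_adjoinRoot [IsReduced R] (hg : g.Separable) (hmonic : g.Monic) :
    IsReduced (AdjoinRoot g) := by
  refine ⟨fun x ⟨k, hk⟩ => ?_⟩
  obtain ⟨f, rfl⟩ := AdjoinRoot.mk_surjective x
  have hmod : AdjoinRoot.mk g (f %ₘ g) = AdjoinRoot.mk g f := by
    simpa [AdjoinRoot.modByMonicHom_mk] using
      AdjoinRoot.mk_leftInverse hmonic (AdjoinRoot.mk g f)
  have hdvd : g ∣ (f %ₘ g) ^ k := by rwa [← AdjoinRoot.mk_eq_zero, map_pow, hmod]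
  have hzero : f %ₘ g = 0 := Polynomial.ext fun n =>
    (hg.isNilpotent_coeff_modByMonic_of_dvd_pow hmonic hdvd n).eq_zero
  rw [← hmod, hzero, map_zero]

end Polynomial.Separable

open Polynomial in
theorem stmt1_general (A : Type*) [CommRing A] [Algebra ℂ A]
    (m : ℕ) (hm : 0 < m) (α : A)
    (hα : Function.Bijective (fun x : A => α * x)) :
    (∀ a : A, IsNilpotent a → a = 0) ↔
      (∀ b : Polynomial A ⧸ Ideal.span {(X : Polynomial A) ^ m - C α},
        IsNilpotent b → b = 0) := by
  obtain ⟨β, hβ⟩ := hα.2 1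
  have hmonic : (X ^ m - C α).Monic := monic_X_pow_sub_C α hm.ne'
  have hm_unit : IsUnit (m : A) := by
    rw [← map_natCast (algebraMap ℂ A)]
    exact (isUnit_iff_ne_zero.mpr (Nat.cast_ne_zero.mpr hm.ne')).map _
  have hα_unit : IsUnit α := .of_mul_eq_one β hβ
  have hsep : (X ^ m - C α).Separable := by
    simpa using separable_X_pow_sub_C_unit hα_unit.unit hm_unit
  constructor
  · intro hA
    have : IsReduced A := ⟨hA⟩
    exact (hsep.isReduced_adjoinRoot hmonic).eq_zero
  · intro hB
    have : IsReduced (AdjoinRoot (X ^ m - C α)) := ⟨hB⟩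
    nontriviality A
    refine (isReduced_of_injective _ <| AdjoinRoot.of_injective_of_monic hmonic ?_).eq_zero
    rw [degree_X_pow_sub_C hm]
    exact_mod_cast hm

open Polynomial in
/-- For a finite-dimensional commutative unital ℂ-algebra `A`, `m > 0`, and `α ∈ A`
with multiplication by `α` invertible, `A` is semisimple (no nonzero nilpotents)
iff `A[y]/(y^m - α)` is semisimple. -/
theorem stmt1 (A : Type*) [CommRing A] [Algebra ℂ A] [FiniteDimensional ℂ A]
    (m : ℕ) (hm : 0 < m) (α : A)
    (hα : Function.Bijective (fun x : A => α * x)) :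
    (∀ a : A, IsNilpotent a → a = 0) ↔
      (∀ b : Polynomial A ⧸ Ideal.span {(X : Polynomial A) ^ m - C α},
        IsNilpotent b → b = 0) :=
  stmt1_general A m hm α hα
end

section
/- Let X = SG(2, 2n) with n ≥ 3, having Fano index r = 2n−1, dimension 4n−5, and Betti numbers b_{2i} = (i+2)/2 for even i, (i+1)/2 for odd i (for 0 ≤ i ≤ 4n−5, with Poincaré duality b_{2i} = b_{2(4n−5−i)}). Then the index-periodic Betti numbers satisfy b̃_{2̄} = n ≠ n−1 = b̃_{−2̄}, where b̃_{ī} = Σ_{j ≡ i mod r} b_{2j}. -/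
/-!
For `i ≤ 4n - 5` both branches of `sgBetti` equal `⌊min(i, 4n-5-i)/2⌋ + 1`. Modulo `r = 2n - 1`,
the only indices in `[0, 4n-5]` congruent to `2` are `2` and `2n + 1`, with Betti numbers `2` and
`n - 2`; the only one congruent to `-2` is `2n - 3`, with Betti number `n - 1`.
-/

/-- The Betti numbers `b_{2i}` of `X = SG(2, 2n)`: for `0 ≤ i ≤ 2n-3` given by the
formula `(i+2)/2` (`i` even), `(i+1)/2` (`i` odd); extended by Poincaré duality
`b_{2i} = b_{2(4n-5-i)}` for `i ≤ 4n-5 = dim X`; zero otherwise. -/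
def sgBetti (n i : ℕ) : ℕ :=
  if i ≤ 2 * n - 3 then (if Even i then (i + 2) / 2 else (i + 1) / 2)
  else if i ≤ 4 * n - 5 then
    (if Even (4 * n - 5 - i) then (4 * n - 5 - i + 2) / 2 else (4 * n - 5 - i + 1) / 2)
  else 0

namespace Nat

theorem eq_or_eq_add_of_mod_eq_of_lt_two_mul {r m j : ℕ} (hj : j < 2 * r) (h : j % r = m) :
    j = m ∨ j = m + r := by
  have hdiv : j / r < 2 := Nat.div_lt_of_lt_mul (by omega)
  have := Nat.div_add_mod j r
  interval_cases j / r <;> omega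

theorem filter_range_mod_eq_eq_singleton {r m N : ℕ} (hmr : m < r) (hm : m < N)
    (hN : N ≤ m + r) :
    (Finset.range N).filter (· % r = m) = {m} := by
  ext j
  simp only [Finset.mem_filter, Finset.mem_range, Finset.mem_singleton]
  constructor
  · rintro ⟨hjN, hjm⟩
    rcases eq_or_eq_add_of_mod_eq_of_lt_two_mul (r := r) (by omega) hjm with h | h <;> omega
  · rintro rfl
    exact ⟨hm, Nat.mod_eq_of_lt (by omega)⟩

theorem filter_range_mod_eq_eq_pair {r m N : ℕ} (hm : m < r) (hN₁ : m + r < N)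
    (hN₂ : N ≤ 2 * r) : (Finset.range N).filter (· % r = m) = {m, m + r} := by
  ext j
  simp only [Finset.mem_filter, Finset.mem_range, Finset.mem_insert, Finset.mem_singleton]
  constructor
  · rintro ⟨hjN, hjm⟩
    exact eq_or_eq_add_of_mod_eq_of_lt_two_mul (by omega) hjm
  · rintro (rfl | rfl)
    · exact ⟨by omega, Nat.mod_eq_of_lt hm⟩
    · exact ⟨hN₁, by rw [Nat.add_mod_right, Nat.mod_eq_of_lt hm]⟩

theorem ite_even_div_two_eq (i : ℕ) :
    (if Even i then (i + 2) / 2 else (i + 1) / 2) = i / 2 + 1 := by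
  simp only [Nat.even_iff]
  split_ifs <;> omega

end Nat

theorem sgBetti_eq {n i : ℕ} (hi : i ≤ 4 * n - 5) :
    sgBetti n i = min i (4 * n - 5 - i) / 2 + 1 := by
  unfold sgBetti
  rw [Nat.ite_even_div_two_eq, Nat.ite_even_div_two_eq]
  split_ifs <;> omega

/-- For `X = SG(2, 2n)` (`n ≥ 3`), with Fano index `r = 2n - 1` and dimension `4n - 5`,
the index-periodic Betti numbers satisfy `b̃_{2̄} = n ≠ n - 1 = b̃_{-2̄}` (the residue
`-2` modulo `r` being `2n - 3`). -/
theorem stmt14 (n : ℕ) (hn : 3 ≤ n) :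
    (∑ j ∈ (Finset.range (4 * n - 4)).filter (fun j => j % (2 * n - 1) = 2),
        sgBetti n j) = n ∧
    (∑ j ∈ (Finset.range (4 * n - 4)).filter (fun j => j % (2 * n - 1) = 2 * n - 3),
        sgBetti n j) = n - 1 ∧
    n ≠ n - 1 := by
  refine ⟨?_, ?_, by omega⟩
  · rw [Nat.filter_range_mod_eq_eq_pair (by omega) (by omega) (by omega),
      Finset.sum_pair (by omega), sgBetti_eq (by omega), sgBetti_eq (by omega)]
    omega
  · rw [Nat.filter_range_mod_eq_eq_singleton (by omega) (by omega) (by omega), Finset.sum_singleton,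
      sgBetti_eq (by omega)]
    omega
end

section
/- Let A = ⊕_{i ∈ ℤ_r} A^ī be a finite-dimensional commutative unital ℂ-algebra graded by ℤ/rℤ. If A has no nonzero nilpotent elements, then dim A^ī ≤ dim A^{d·ī} for all integers i and d ≥ 1, and consequently dim A^ī = dim A^{−ī} for all i. -/
/-!
In a reduced Artinian ring every `u` lies in `u² A`. Choose `u ∈ A^i` whose annihilator is
minimal among elements of `A^i`, and write `u = u² w`. The degree-zero part `e = u v` of `u w`
(with `v ∈ A^{-i}`) is an idempotent with `e u = u`. For `x ∈ A^i` put `y = x - e x ∈ A^i`; since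
`e y = 0`, the annihilator of `u + y` is `ann u ∩ ann y`, so by minimality `ann u ⊆ ann y`, and
`1 - e ∈ ann u` gives `y = 0`. Hence `x = v (u x)` and multiplication by `u` is injective on
`A^i`. Reducedness makes multiplication by `u^{d-1}` injective too, embedding `A^i` into
`A^{d i}`. Symmetry follows with `d = 2r - 1`, for which `d • i = -i`.
-/

open DirectSum Module

section Reduced

variable {A : Type*} [CommRing A] [IsReduced A]

theorem mul_eq_zero_of_pow_mul_eq_zero {u x : A} {n : ℕ} (h : u ^ n * x = 0) : u * x = 0 :=
  eq_zero_of_pow_eq_zero (n := n + 1) <| calc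
    (u * x) ^ (n + 1) = u ^ n * x * (u * x ^ n) := by ring
    _ = 0 := by rw [h, zero_mul]

theorem IsArtinianRing.exists_mul_self_mul_eq [IsArtinianRing A] (a : A) : ∃ w, a * a * w = a := by
  obtain ⟨n, w, hw⟩ := IsArtinian.exists_pow_succ_smul_dvd a (1 : A)
  have h : a ^ n * (a * w - 1) = 0 := by
    rw [smul_eq_mul, smul_eq_mul, mul_one, pow_succ] at hw
    linear_combination hw
  exact ⟨w, by linear_combination mul_eq_zero_of_pow_mul_eq_zero h⟩

end Reduced

theorem annihilator_span_add_eq_inf {A : Type*} [CommRing A] {e u y : A} (hu : e * u = u)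
    (hy : e * y = 0) :
    (A ∙ (u + y)).annihilator = (A ∙ u).annihilator ⊓ (A ∙ y).annihilator := by
  ext z
  simp only [Submodule.mem_inf, Submodule.mem_annihilator_span_singleton, smul_eq_mul]
  refine ⟨fun h => ?_, fun ⟨hzu, hzy⟩ => by rw [mul_add, hzu, hzy, add_zero]⟩
  have hzu : z * u = 0 := by linear_combination e * h - z * hu - z * hy
  exact ⟨hzu, by linear_combination h - hzu⟩

section Graded

variable {ι A σ : Type*} [DecidableEq ι] [AddCommGroup ι] [CommRing A] [SetLike σ A]
  [AddSubgroupClass σ A] (𝒜 : ι → σ) [GradedRing 𝒜] [IsArtinianRing A] [IsReduced A]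

theorem exists_isIdempotentElem_mul_of_mem {u : A} {i : ι} (hu : u ∈ 𝒜 i) :
    ∃ v ∈ 𝒜 (-i), IsIdempotentElem (u * v) ∧ u * v * u = u := by
  obtain ⟨w, hw⟩ := IsArtinianRing.exists_mul_self_mul_eq u
  set v : A := ↑(decompose 𝒜 w (-i))
  have hdeg0 : (decompose 𝒜 (u * w) 0 : A) = u * v := by
    rw [← add_neg_cancel i]
    exact coe_decompose_mul_add_of_left_mem 𝒜 hu
  -- The degree-`i` part of `(u * w) * u = u` is `u * v * u`.
  have huvu : u * v * u = u := by
    have h := coe_decompose_mul_add_of_right_mem 𝒜 (i := 0) hu (a := u * w)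
    rwa [zero_add, show u * w * u = u by linear_combination hw, decompose_of_mem_same 𝒜 hu,
      hdeg0, eq_comm] at h
  refine ⟨v, SetLike.coe_mem _, ?_, huvu⟩
  calc u * v * (u * v) = u * v * u * v := by ring
    _ = u * v := by rw [huvu]

theorem exists_mem_forall_mul_eq_zero_imp_eq_zero (i : ι) :
    ∃ u ∈ 𝒜 i, ∀ x ∈ 𝒜 i, u * x = 0 → x = 0 := by
  obtain ⟨_, ⟨u, hu, rfl⟩, hmin⟩ := wellFounded_lt.has_min
    ((fun a => (A ∙ a).annihilator) '' (𝒜 i : Set A)) ⟨_, 0, zero_mem _, rfl⟩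
  obtain ⟨v, hv, he, huvu⟩ := exists_isIdempotentElem_mul_of_mem 𝒜 hu
  have hfix : ∀ x ∈ 𝒜 i, u * v * x = x := by
    intro x hx
    have hy : x - u * v * x ∈ 𝒜 i :=
      sub_mem hx (by simpa using SetLike.mul_mem_graded (SetLike.mul_mem_graded hu hv) hx)
    have hey : u * v * (x - u * v * x) = 0 := by
      rw [mul_sub, ← mul_assoc, he.eq, sub_self]
    have hsum := annihilator_span_add_eq_inf huvu hey
    have hann : (A ∙ u).annihilator ≤ (A ∙ (x - u * v * x)).annihilator := by
      have hle : (A ∙ (u + (x - u * v * x))).annihilator ≤ (A ∙ u).annihilator :=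
        hsum ▸ inf_le_left
      rw [← hle.eq_of_not_lt (hmin _ ⟨_, add_mem hu hy, rfl⟩), hsum]
      exact inf_le_right
    have h := (Submodule.mem_annihilator_span_singleton _ _).1 <|
      hann ((Submodule.mem_annihilator_span_singleton u (1 - u * v)).2 (by
        rw [smul_eq_mul, sub_mul, one_mul, huvu, sub_self]))
    rw [smul_eq_mul] at h
    linear_combination -h - hey
  refine ⟨u, hu, fun x hx hux => ?_⟩
  rw [← hfix x hx]
  linear_combination v * hux

end Graded

theorem finrank_le_finrank_nsmul {ι K A : Type*} [DecidableEq ι] [AddCommGroup ι] [Field K]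
    [CommRing A] [Algebra K A] [FiniteDimensional K A] [IsReduced A] (𝒜 : ι → Submodule K A)
    [GradedAlgebra 𝒜] (i : ι) {d : ℕ} (hd : 0 < d) :
    finrank K (𝒜 i) ≤ finrank K (𝒜 (d • i)) := by
  have := IsArtinianRing.of_finite K A
  obtain ⟨u, hu, hu_inj⟩ := exists_mem_forall_mul_eq_zero_imp_eq_zero 𝒜 i
  obtain ⟨n, rfl⟩ := Nat.exists_eq_add_one_of_ne_zero hd.ne'
  let φ : 𝒜 i →ₗ[K] 𝒜 ((n + 1) • i) := (LinearMap.mulLeft K (u ^ n)).restrict fun x hx => by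
    simpa [succ_nsmul] using SetLike.mul_mem_graded (SetLike.pow_mem_graded n hu) hx
  refine LinearMap.finrank_le_finrank_of_injective (f := φ) <|
    (injective_iff_map_eq_zero φ).2 fun ⟨x, hx⟩ hφx => ?_
  have hux : u ^ n * x = 0 := congrArg Subtype.val hφx
  exact Subtype.ext (hu_inj x hx (mul_eq_zero_of_pow_mul_eq_zero hux))

/-- Let `A = ⊕_{i ∈ ℤ/r} A^i` be a finite-dimensional commutative unital ℂ-algebra
graded by `ℤ/rℤ`. If `A` has no nonzero nilpotent elements, then
`dim A^i ≤ dim A^{d·i}` for all `i` and all `d ≥ 1`, and consequently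
`dim A^i = dim A^{-i}` for all `i`. -/
theorem stmt19 (r : ℕ) (hr : 0 < r)
    (A : Type*) [CommRing A] [Algebra ℂ A] [FiniteDimensional ℂ A]
    (𝒜 : ZMod r → Submodule ℂ A)
    (hdecomp : DirectSum.IsInternal 𝒜)
    (hone : (1 : A) ∈ 𝒜 0)
    (hmul : ∀ (i j : ZMod r) (a b : A), a ∈ 𝒜 i → b ∈ 𝒜 j → a * b ∈ 𝒜 (i + j))
    (hred : ∀ a : A, IsNilpotent a → a = 0) :
    (∀ (i : ZMod r) (d : ℕ), 1 ≤ d →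
      Module.finrank ℂ (𝒜 i) ≤ Module.finrank ℂ (𝒜 (d • i))) ∧
    (∀ i : ZMod r, Module.finrank ℂ (𝒜 i) = Module.finrank ℂ (𝒜 (-i))) := by
  let _ : GradedAlgebra 𝒜 :=
    { hdecomp.chooseDecomposition with
      one_mem := hone
      mul_mem := fun {i j a b} ha hb => hmul i j a b ha hb }
  have _ : IsReduced A := ⟨hred⟩
  have hle (i : ZMod r) (d : ℕ) (hd : 1 ≤ d) : finrank ℂ (𝒜 i) ≤ finrank ℂ (𝒜 (d • i)) :=
    finrank_le_finrank_nsmul 𝒜 i hd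
  have hneg (j : ZMod r) : (2 * r - 1) • j = -j := by
    rw [nsmul_eq_mul, Nat.cast_sub (by omega), Nat.cast_mul, ZMod.natCast_self]
    ring
  refine ⟨hle, fun i => le_antisymm ?_ ?_⟩
  · have h := hle i (2 * r - 1) (by omega)
    rwa [hneg] at h
  · have h := hle (-i) (2 * r - 1) (by omega)
    rwa [hneg, neg_neg] at h
end
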